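/- arXiv:2512.01161 — 2 statements merged into one kernel-verified Lean document; each statement's English description precedes it below -/
import Mathlib

section
/- Let L ⊂ ℤ³ be the subgroup generated by (1,1,1), (4,−4,0), and (10,−2,−4) (corresponding to the C₄-representations ρ₄, 4−4σ, and 10−2σ−4λ). Then ℤ³/L ≅ ℤ/2 ⊕ ℤ/32. -/
noncomputable section

namespace QLatE2C4

abbrev Lat : Submodule ℤ (Fin 3 → ℤ) :=
  Submodule.span ℤ ({![1, 1, 1], ![4, -4, 0], ![10, -2, -4]} : Set (Fin 3 → ℤ))

def φ : (Fin 3 → ℤ) →ₗ[ℤ] ZMod 2 × ZMod 32 where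
  toFun x := (((x 0 - x 2 : ℤ) : ZMod 2), ((7 * x 0 - x 1 - 6 * x 2 : ℤ) : ZMod 32))
  map_add' x y := by
    simp only [Pi.add_apply, Prod.mk_add_mk, Prod.mk.injEq]
    constructor <;> push_cast <;> ring
  map_smul' c x := by
    simp only [Pi.smul_apply, smul_eq_mul, RingHom.id_apply, Prod.smul_mk, zsmul_eq_mul,
      Prod.mk.injEq]
    constructor <;> push_cast <;> ring

lemma span_le_ker : Lat ≤ LinearMap.ker φ := by
  rw [Submodule.span_le]
  rintro v hv
  simp only [Set.mem_insert_iff, Set.mem_singleton_iff] at hv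
  rcases hv with rfl | rfl | rfl <;>
    simp only [SetLike.mem_coe, LinearMap.mem_ker, φ, LinearMap.coe_mk, AddHom.coe_mk] <;>
    norm_num [Prod.ext_iff] <;> decide

lemma mem_lat (a b c : ℤ) :
    a • (![1, 1, 1] : Fin 3 → ℤ) + b • ![4, -4, 0] + c • ![10, -2, -4] ∈ Lat := by
  refine Submodule.add_mem _ (Submodule.add_mem _ ?_ ?_) ?_ <;>
    exact Submodule.smul_mem _ _ (Submodule.subset_span (by simp))

lemma ker_le_span : LinearMap.ker φ ≤ Lat := by
  intro x hx
  simp only [LinearMap.mem_ker, φ, LinearMap.coe_mk, AddHom.coe_mk, Prod.mk_eq_zero] at hx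
  obtain ⟨h2, h32⟩ := hx
  rw [ZMod.intCast_zmod_eq_zero_iff_dvd] at h2 h32
  obtain ⟨s, hs⟩ := h2
  obtain ⟨t, ht⟩ := h32
  have key : x = (x 0 + 2 * s - 8 * t) • (![1, 1, 1] : Fin 3 → ℤ)
      + (-3 * s + 7 * t) • ![4, -4, 0] + (s - 2 * t) • ![10, -2, -4] := by
    funext i
    push_cast at hs ht
    fin_cases i <;>
      simp only [Pi.add_apply, Pi.smul_apply, smul_eq_mul] <;>
      simp [Matrix.cons_val_zero, Matrix.cons_val_one] <;>
      linarith
  rw [key]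
  exact mem_lat _ _ _

lemma φ_surj : Function.Surjective φ := by
  rintro ⟨p, q⟩
  refine ⟨![0, 6 * (p.val : ℤ) - (q.val : ℤ), -(p.val : ℤ)], ?_⟩
  simp only [φ, LinearMap.coe_mk, AddHom.coe_mk]
  have h1 : (((0 : Fin 3 → ℤ) 0) : ℤ) = 0 := rfl
  simp only [Matrix.cons_val_zero, Matrix.cons_val_one, Matrix.head_cons,
    Matrix.cons_val_two, Matrix.tail_cons, Prod.mk.injEq]
  constructor
  · push_cast
    simp [ZMod.natCast_val, ZMod.cast_id]
  · push_cast
    ring_nf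
    simp [ZMod.natCast_val, ZMod.cast_id]

end QLatE2C4

/-- `RO(C₄) ≅ ℤ³` with basis `{1, σ, λ}`; the quotient by the lattice generated by
`ρ₄ = (1,1,1)`, `4−4σ = (4,−4,0)` and `10−2σ−4λ = (10,−2,−4)` is `ℤ/2 ⊕ ℤ/32`. -/
theorem quotient_lattice_E2_C4 :
    Nonempty (((Fin 3 → ℤ) ⧸
        Submodule.span ℤ ({![1, 1, 1], ![4, -4, 0], ![10, -2, -4]} : Set (Fin 3 → ℤ)))
      ≃+ (ZMod 2 × ZMod 32)) := by
  classical
  have hker : QLatE2C4.Lat = LinearMap.ker QLatE2C4.φ :=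
    le_antisymm QLatE2C4.span_le_ker QLatE2C4.ker_le_span
  refine ⟨(LinearEquiv.ofBijective
      (Submodule.liftQ QLatE2C4.Lat QLatE2C4.φ QLatE2C4.span_le_ker) ⟨?_, ?_⟩).toAddEquiv⟩
  · rw [← LinearMap.ker_eq_bot, Submodule.ker_liftQ, hker]
    simp
  · intro y
    obtain ⟨x, hx⟩ := QLatE2C4.φ_surj y
    exact ⟨Submodule.Quotient.mk x, hx⟩
end
end

section
/- Let ℓ ≥ 0 and let M be the 5×5 integer matrix with rows (1,1,1,1,1), (2^{2ℓ+2}, 2^{2ℓ+2}, −2^{2ℓ+2}, −2^{2ℓ+2}, 0), (2^{2ℓ+2}, −2^{2ℓ+2}, 2^{2ℓ+2}, −2^{2ℓ+2}, 0), (2^{2ℓ+2}, −2^{2ℓ+2}, −2^{2ℓ+2}, 2^{2ℓ+2}, 0), (2^{4ℓ+4}, 2^{4ℓ+4}, 0, 0, −2^{4ℓ+3}). Then the cokernel of M is isomorphic to ℤ/2^{2ℓ+2} ⊕ ℤ/2^{2ℓ+3} ⊕ ℤ/2^{2ℓ+3} ⊕ ℤ/2^{4ℓ+6}. -/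
/-! Auxiliary setup for the Smith normal form computation. -/

private noncomputable def q8cast (n : ℕ) : ℤ →ₗ[ℤ] ZMod n :=
  (Int.castAddHom (ZMod n)).toIntLinearMap

private def q8pr (i : Fin 5) : (Fin 5 → ℤ) →ₗ[ℤ] ℤ := LinearMap.proj i

private noncomputable def ψQ8 (l : ℕ) : (Fin 5 → ℤ) →ₗ[ℤ]
    ZMod (2 ^ (2 * l + 2)) × ZMod (2 ^ (2 * l + 3)) × ZMod (2 ^ (2 * l + 3))
      × ZMod (2 ^ (4 * l + 6)) :=
  ((q8cast (2 ^ (2 * l + 2))).comp (q8pr 4 - q8pr 0)).prod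
    (((q8cast (2 ^ (2 * l + 3))).comp (q8pr 1 - q8pr 0)).prod
      (((q8cast (2 ^ (2 * l + 3))).comp (q8pr 1 + q8pr 2 - (2 : ℤ) • q8pr 4)).prod
        ((q8cast (2 ^ (4 * l + 6))).comp
          (q8pr 0 + q8pr 1 + q8pr 2 + q8pr 3 - (4 : ℤ) • q8pr 4))))

private theorem ψQ8_apply (l : ℕ) (x : Fin 5 → ℤ) :
    ψQ8 l x = (((x 4 - x 0 : ℤ) : ZMod (2 ^ (2 * l + 2))),
               ((x 1 - x 0 : ℤ) : ZMod (2 ^ (2 * l + 3))),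
               ((x 1 + x 2 - 2 * x 4 : ℤ) : ZMod (2 ^ (2 * l + 3))),
               ((x 0 + x 1 + x 2 + x 3 - 4 * x 4 : ℤ) : ZMod (2 ^ (4 * l + 6)))) := by
  simp [ψQ8, q8cast, q8pr]

private theorem ψQ8_surjective (l : ℕ) : Function.Surjective (ψQ8 l) := by
  rintro ⟨α, β, γ, δ⟩
  obtain ⟨a, ha⟩ := ZMod.intCast_surjective (n := 2 ^ (2 * l + 2)) α
  obtain ⟨b, hb⟩ := ZMod.intCast_surjective (n := 2 ^ (2 * l + 3)) β
  obtain ⟨c, hc⟩ := ZMod.intCast_surjective (n := 2 ^ (2 * l + 3)) γ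
  obtain ⟨d, hd⟩ := ZMod.intCast_surjective (n := 2 ^ (4 * l + 6)) δ
  refine ⟨![0, b, 2 * a - b + c, 2 * a - c + d, a], ?_⟩
  rw [ψQ8_apply]
  simp only [Matrix.cons_val_zero, Matrix.cons_val_one, Matrix.head_cons, Matrix.cons_val_two,
    Matrix.tail_cons, Matrix.cons_val_three, Matrix.cons_val_four, Prod.mk.injEq]
  refine ⟨?_, ?_, ?_, ?_⟩
  · rw [← ha]; congr 1; ring
  · rw [← hb]; congr 1; ring
  · rw [← hc]; congr 1; ring
  · rw [← hd]; congr 1; ring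

private theorem finmk2 (h : 2 < 5) : (⟨2, h⟩ : Fin 5) = 2 := rfl
private theorem finmk3 (h : 3 < 5) : (⟨3, h⟩ : Fin 5) = 3 := rfl
private theorem finmk4 (h : 4 < 5) : (⟨4, h⟩ : Fin 5) = 4 := rfl

private theorem q8_span_eq_ker (l : ℕ) :
    Submodule.span ℤ
          ({![1, 1, 1, 1, 1],
            ![2 ^ (2 * l + 2), 2 ^ (2 * l + 2), -(2 ^ (2 * l + 2)), -(2 ^ (2 * l + 2)), 0],
            ![2 ^ (2 * l + 2), -(2 ^ (2 * l + 2)), 2 ^ (2 * l + 2), -(2 ^ (2 * l + 2)), 0],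
            ![2 ^ (2 * l + 2), -(2 ^ (2 * l + 2)), -(2 ^ (2 * l + 2)), 2 ^ (2 * l + 2), 0],
            ![2 ^ (4 * l + 4), 2 ^ (4 * l + 4), 0, 0, -(2 ^ (4 * l + 3))]} : Set (Fin 5 → ℤ))
      = LinearMap.ker (ψQ8 l) := by
  apply le_antisymm
  · rw [Submodule.span_le]
    rintro v (rfl | rfl | rfl | rfl | rfl) <;>
      (rw [SetLike.mem_coe, LinearMap.mem_ker, ψQ8_apply,
        show (0 : ZMod (2 ^ (2 * l + 2)) × ZMod (2 ^ (2 * l + 3)) × ZMod (2 ^ (2 * l + 3))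
          × ZMod (2 ^ (4 * l + 6))) = (0, 0, 0, 0) from rfl]
       simp only [Matrix.cons_val_zero, Matrix.cons_val_one, Matrix.head_cons,
         Matrix.cons_val_two, Matrix.tail_cons, Matrix.cons_val_three, Matrix.cons_val_four,
         Prod.mk.injEq]
       refine ⟨?_, ?_, ?_, ?_⟩ <;>
         rw [ZMod.intCast_zmod_eq_zero_iff_dvd] <;>
         first
           | (refine ⟨0, ?_⟩; push_cast; ring1)
           | (refine ⟨-1, ?_⟩; push_cast; ring1)
           | (refine ⟨-3 * 2 ^ (2 * l + 1), ?_⟩; push_cast; ring1)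
           | (refine ⟨2 ^ (2 * l + 2), ?_⟩; push_cast; ring1)
           | (refine ⟨1, ?_⟩; push_cast; ring1))
  · intro x hx
    rw [LinearMap.mem_ker, ψQ8_apply,
      show (0 : ZMod (2 ^ (2 * l + 2)) × ZMod (2 ^ (2 * l + 3)) × ZMod (2 ^ (2 * l + 3))
        × ZMod (2 ^ (4 * l + 6))) = (0, 0, 0, 0) from rfl, Prod.mk.injEq, Prod.mk.injEq,
      Prod.mk.injEq] at hx
    obtain ⟨e1, e2, e3, e4⟩ := hx
    rw [ZMod.intCast_zmod_eq_zero_iff_dvd] at e1 e2 e3 e4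
    obtain ⟨c1, h1⟩ := e1
    obtain ⟨c2, h2⟩ := e2
    obtain ⟨c3, h3⟩ := e3
    obtain ⟨c4, h4⟩ := e4
    push_cast at h1 h2 h3 h4
    have hxeq : x =
        (x 0 + 2 ^ (2 * l + 2) * c1 + 2 ^ (4 * l + 3) * c4) • ![1, 1, 1, 1, 1]
        + (-c1 + c2 - 3 * 2 ^ (2 * l + 1) * c4) •
            ![(2:ℤ) ^ (2 * l + 2), 2 ^ (2 * l + 2), -(2 ^ (2 * l + 2)), -(2 ^ (2 * l + 2)), 0]
        + (-c2 + c3 - 2 ^ (2 * l + 2) * c4) •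
            ![(2:ℤ) ^ (2 * l + 2), -(2 ^ (2 * l + 2)), 2 ^ (2 * l + 2), -(2 ^ (2 * l + 2)), 0]
        + (-c3 + 2 ^ (2 * l + 2) * c4) •
            ![(2:ℤ) ^ (2 * l + 2), -(2 ^ (2 * l + 2)), -(2 ^ (2 * l + 2)), 2 ^ (2 * l + 2), 0]
        + c4 • ![(2:ℤ) ^ (4 * l + 4), 2 ^ (4 * l + 4), 0, 0, -(2 ^ (4 * l + 3))] := by
      funext i
      fin_cases i <;>
        simp only [Pi.add_apply, Pi.smul_apply, smul_eq_mul, Fin.zero_eta, Fin.mk_one,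
          finmk2, finmk3, finmk4,
          Matrix.cons_val_zero, Matrix.cons_val_one, Matrix.head_cons, Matrix.cons_val_two,
          Matrix.tail_cons, Matrix.cons_val_three, Matrix.cons_val_four]
      · ring1
      · linear_combination h2
      · linear_combination 2 * h1 - h2 + h3
      · linear_combination 2 * h1 - h3 + h4
      · linear_combination h1
    rw [hxeq]
    refine Submodule.add_mem _ (Submodule.add_mem _ (Submodule.add_mem _ (Submodule.add_mem _
      (Submodule.smul_mem _ _ (Submodule.subset_span ?_))
      (Submodule.smul_mem _ _ (Submodule.subset_span ?_)))
      (Submodule.smul_mem _ _ (Submodule.subset_span ?_)))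
      (Submodule.smul_mem _ _ (Submodule.subset_span ?_)))
      (Submodule.smul_mem _ _ (Submodule.subset_span ?_))
    · left; rfl
    · right; left; rfl
    · right; right; left; rfl
    · right; right; right; left; rfl
    · right; right; right; right; rfl

/-- Theorem C(2): for `ℓ ≥ 0`, the cokernel of the `5 × 5` matrix with rows
`(1,1,1,1,1)`, `(2^{2ℓ+2}, 2^{2ℓ+2}, −2^{2ℓ+2}, −2^{2ℓ+2}, 0)`,
`(2^{2ℓ+2}, −2^{2ℓ+2}, 2^{2ℓ+2}, −2^{2ℓ+2}, 0)`,
`(2^{2ℓ+2}, −2^{2ℓ+2}, −2^{2ℓ+2}, 2^{2ℓ+2}, 0)`,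
`(2^{4ℓ+4}, 2^{4ℓ+4}, 0, 0, −2^{4ℓ+3})`
(in the basis `{1, σᵢ, σⱼ, σₖ, ℍ}` of `RO(Q₈) ≅ ℤ⁵`) is
`ℤ/2^{2ℓ+2} ⊕ ℤ/2^{2ℓ+3} ⊕ ℤ/2^{2ℓ+3} ⊕ ℤ/2^{4ℓ+6}`. -/
theorem cokernel_periodicity_matrix_Q8 (l : ℕ) :
    Nonempty (((Fin 5 → ℤ) ⧸
        Submodule.span ℤ
          ({![1, 1, 1, 1, 1],
            ![2 ^ (2 * l + 2), 2 ^ (2 * l + 2), -(2 ^ (2 * l + 2)), -(2 ^ (2 * l + 2)), 0],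
            ![2 ^ (2 * l + 2), -(2 ^ (2 * l + 2)), 2 ^ (2 * l + 2), -(2 ^ (2 * l + 2)), 0],
            ![2 ^ (2 * l + 2), -(2 ^ (2 * l + 2)), -(2 ^ (2 * l + 2)), 2 ^ (2 * l + 2), 0],
            ![2 ^ (4 * l + 4), 2 ^ (4 * l + 4), 0, 0, -(2 ^ (4 * l + 3))]} : Set (Fin 5 → ℤ)))
      ≃+ (ZMod (2 ^ (2 * l + 2)) × ZMod (2 ^ (2 * l + 3)) × ZMod (2 ^ (2 * l + 3))
          × ZMod (2 ^ (4 * l + 6)))) := by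
  exact ⟨((Submodule.quotEquivOfEq _ _ (q8_span_eq_ker l)).trans
    ((ψQ8 l).quotKerEquivOfSurjective (ψQ8_surjective l))).toAddEquiv⟩
end
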